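/- Let $E \subset \mathbb{R}^d$ be a compact set, $x \in \mathbb{R}^d$, and let $\mu$ be a Borel probability measure with $\mu(E) = 1$. Suppose there exist $\tau \in (0,1]$, $K \in \mathbb{N}$, and $\beta > 0$ such that for every integer $k > K$, every integer $M \leq 2^{k\tau}$, and every finite family of intervals $I_1, \dots, I_M \subset \mathbb{R}$ each of length satisfying $2^{-k-1} \leq |I_j| < 2^{-k}$, one has $\mu(\{y : |y-x| \in \bigcup_{j=1}^M I_j\}) < 2^{-k\beta}$. Then $\dim_{\mathcal{H}}(\Delta_x(E)) \geq \tau$. -/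

import Mathlib

open MeasureTheory Set
open scoped ENNReal NNReal

lemma rpow_eq_zpow (m : ℤ) : (2:ℝ) ^ (m : ℝ) = (2:ℝ) ^ m := Real.rpow_intCast 2 m

/-- Dyadic scale of a small positive real. -/
lemma dyadic_scale (N : ℕ) (c : ℝ) (hc : 0 < c) (hlt : c < 2 ^ (-((N:ℝ) + 1))) :
    ∃ k : ℕ, N < k ∧ 2 ^ (-(k : ℝ) - 1) ≤ c ∧ c < 2 ^ (-(k : ℝ)) := by
  set L : ℤ := Int.log 2 c with hL
  have h1 : (2:ℝ) ^ L ≤ c := Int.zpow_log_le_self one_lt_two hc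
  have h2 : c < (2:ℝ) ^ (L + 1) := Int.lt_zpow_succ_log_self one_lt_two c
  have e1 : (2:ℝ) ^ (-((N:ℝ)+1)) = (2:ℝ) ^ ((-(N:ℤ)-1) : ℤ) := by
    rw [← rpow_eq_zpow]; congr 1; push_cast; ring
  have hLlt : L < -(N:ℤ) - 1 := by
    rw [← zpow_lt_zpow_iff_right₀ (one_lt_two : (1:ℝ) < 2)]
    exact lt_of_le_of_lt h1 (by rw [← e1]; exact hlt)
  have hk0 : (0:ℤ) ≤ -L - 1 := by omega
  have hreal : (((-L - 1).toNat : ℕ) : ℝ) = -(L:ℝ) - 1 := by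
    exact_mod_cast congrArg (Int.cast : ℤ → ℝ) (Int.toNat_of_nonneg hk0)
  refine ⟨(-L - 1).toNat, by omega, ?_, ?_⟩
  · rw [show (-(((-L - 1).toNat : ℕ) : ℝ) - 1) = ((L : ℤ) : ℝ) by rw [hreal]; ring,
      rpow_eq_zpow]
    exact h1
  · rw [show (-(((-L - 1).toNat : ℕ) : ℝ)) = ((L + 1 : ℤ) : ℝ) by rw [hreal]; push_cast; ring,
      rpow_eq_zpow]
    exact h2

lemma tail_sum_lt_one (β : ℝ) (hβ : 0 < β) (N : ℕ)
    (hN : (2:ℝ) ^ (-((N:ℝ)+1) * β) < 1 - 2 ^ (-β)) :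
    ∑' m : ℕ, ENNReal.ofReal ((2:ℝ) ^ (-(((N+1+m : ℕ)):ℝ) * β)) < 1 := by
  have h2 : (0:ℝ) < 2 := by norm_num
  have hq1 : (2:ℝ) ^ (-β) < 1 := by
    apply Real.rpow_lt_one_of_one_lt_of_neg one_lt_two (by linarith)
  have hqpos : (0:ℝ) < (2:ℝ) ^ (-β) := Real.rpow_pos_of_pos h2 _
  have key : ∀ m : ℕ, (2:ℝ) ^ (-(((N+1+m : ℕ)):ℝ) * β)
      = (2:ℝ) ^ (-((N:ℝ)+1) * β) * ((2:ℝ) ^ (-β)) ^ m := by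
    intro m
    rw [← Real.rpow_natCast ((2:ℝ) ^ (-β)) m, ← Real.rpow_mul (le_of_lt h2),
      ← Real.rpow_add h2]
    congr 1
    push_cast; ring
  calc ∑' m : ℕ, ENNReal.ofReal ((2:ℝ) ^ (-(((N+1+m : ℕ)):ℝ) * β))
      = ∑' m : ℕ, ENNReal.ofReal ((2:ℝ) ^ (-((N:ℝ)+1) * β)) * (ENNReal.ofReal ((2:ℝ) ^ (-β))) ^ m := by
        congr 1; funext m
        rw [key m, ENNReal.ofReal_mul (by positivity), ← ENNReal.ofReal_pow (le_of_lt hqpos)]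
    _ = ENNReal.ofReal ((2:ℝ) ^ (-((N:ℝ)+1) * β)) * (1 - ENNReal.ofReal ((2:ℝ) ^ (-β)))⁻¹ := by
        rw [ENNReal.tsum_mul_left, ENNReal.tsum_geometric]
    _ < 1 := by
        set a := ENNReal.ofReal ((2:ℝ) ^ (-((N:ℝ)+1) * β))
        set q := ENNReal.ofReal ((2:ℝ) ^ (-β))
        have h1q : (1:ℝ≥0∞) - q = ENNReal.ofReal (1 - (2:ℝ) ^ (-β)) := by
          rw [ENNReal.ofReal_sub _ (le_of_lt hqpos), ENNReal.ofReal_one]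
        have hb0 : (1:ℝ≥0∞) - q ≠ 0 := by
          rw [h1q]; simp [ENNReal.ofReal_eq_zero]; linarith
        have hbt : (1:ℝ≥0∞) - q ≠ ⊤ :=
          ne_top_of_le_ne_top ENNReal.one_ne_top tsub_le_self
        rw [← div_eq_mul_inv, ENNReal.div_lt_iff (Or.inl hb0) (Or.inl hbt), one_mul, h1q]
        exact ENNReal.ofReal_lt_ofReal_iff_of_nonneg (by positivity) |>.mpr hN

lemma delta_sum (s ε' δ : ℝ) (hs : 0 < s) (hδ : 0 < δ) (hε' : 0 < ε')
    (hδs : δ ^ s ≤ ε' * (1 - (1/2:ℝ) ^ s)) :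
    ∑' n : ℕ, ENNReal.ofReal ((δ * (1/2:ℝ)^n) ^ s) ≤ ENNReal.ofReal ε' := by
  have hhalf0 : (0:ℝ) < (1/2:ℝ) ^ s := Real.rpow_pos_of_pos (by norm_num) _
  have hhalf1 : (1/2:ℝ) ^ s < 1 :=
    Real.rpow_lt_one (by norm_num) (by norm_num) hs
  have key : ∀ n : ℕ, ((δ * (1/2:ℝ)^n) ^ s) = δ ^ s * ((1/2:ℝ) ^ s) ^ n := by
    intro n
    rw [Real.mul_rpow (le_of_lt hδ) (by positivity), ← Real.rpow_natCast ((1/2:ℝ)) n,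
      ← Real.rpow_mul (by norm_num), mul_comm (n:ℝ) s, Real.rpow_mul (by norm_num),
      Real.rpow_natCast]
  have h1q : (1:ℝ≥0∞) - ENNReal.ofReal ((1/2:ℝ) ^ s) = ENNReal.ofReal (1 - (1/2:ℝ) ^ s) := by
    rw [ENNReal.ofReal_sub _ (le_of_lt hhalf0), ENNReal.ofReal_one]
  have hb0 : (1:ℝ≥0∞) - ENNReal.ofReal ((1/2:ℝ) ^ s) ≠ 0 := by
    rw [h1q]; simp [ENNReal.ofReal_eq_zero]; linarith
  have hbt : (1:ℝ≥0∞) - ENNReal.ofReal ((1/2:ℝ) ^ s) ≠ ⊤ :=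
    ne_top_of_le_ne_top ENNReal.one_ne_top tsub_le_self
  calc ∑' n : ℕ, ENNReal.ofReal ((δ * (1/2:ℝ)^n) ^ s)
      = ∑' n : ℕ, ENNReal.ofReal (δ ^ s) * (ENNReal.ofReal ((1/2:ℝ) ^ s)) ^ n := by
        congr 1; funext n
        rw [key n, ENNReal.ofReal_mul (by positivity), ← ENNReal.ofReal_pow (le_of_lt hhalf0)]
    _ = ENNReal.ofReal (δ ^ s) * (1 - ENNReal.ofReal ((1/2:ℝ) ^ s))⁻¹ := by
        rw [ENNReal.tsum_mul_left, ENNReal.tsum_geometric]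
    _ ≤ ENNReal.ofReal ε' := by
        rw [← div_eq_mul_inv, ENNReal.div_le_iff_le_mul (Or.inl hb0) (Or.inl hbt), h1q,
          ← ENNReal.ofReal_mul (le_of_lt hε')]
        exact ENNReal.ofReal_le_ofReal hδs

lemma choose_Kp (β : ℝ) (hβ : 0 < β) (K : ℕ) :
    ∃ N : ℕ, K ≤ N ∧ (2:ℝ) ^ (-((N:ℝ)+1) * β) < 1 - 2 ^ (-β) := by
  have hq1 : (2:ℝ) ^ (-β) < 1 :=
    Real.rpow_lt_one_of_one_lt_of_neg one_lt_two (by linarith)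
  have hqpos : (0:ℝ) < (2:ℝ) ^ (-β) := Real.rpow_pos_of_pos (by norm_num) _
  obtain ⟨n, hn⟩ := exists_pow_lt_of_lt_one (by linarith : (0:ℝ) < 1 - 2 ^ (-β)) hq1
  refine ⟨max K n, le_max_left _ _, ?_⟩
  have hexp : (2:ℝ) ^ (-(((max K n : ℕ):ℝ)+1) * β) = ((2:ℝ) ^ (-β)) ^ (max K n + 1) := by
    rw [← Real.rpow_natCast ((2:ℝ) ^ (-β)) (max K n + 1), ← Real.rpow_mul (by norm_num)]
    congr 1; push_cast; ring
  rw [hexp]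
  calc ((2:ℝ) ^ (-β)) ^ (max K n + 1) ≤ ((2:ℝ) ^ (-β)) ^ n := by
        apply pow_le_pow_of_le_one (le_of_lt hqpos) (le_of_lt hq1)
        omega
    _ < 1 - 2 ^ (-β) := hn

lemma subset_Icc_of_diam (A : Set ℝ) (hA : A.Nonempty) (hb : EMetric.diam A ≠ ⊤)
    (c : ℝ) (hc : Metric.diam A ≤ c) : A ⊆ Set.Icc (sInf A) (sInf A + c) := by
  have hbd : Bornology.IsBounded A := Metric.isBounded_iff_ediam_ne_top.mpr hb
  have hbb : BddBelow A := hbd.bddBelow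
  intro z hz
  have h1 : sInf A ≤ z := csInf_le hbb hz
  have hcl : sInf A ∈ closure A := csInf_mem_closure hA hbb
  have h2 : dist z (sInf A) ≤ Metric.diam (closure A) :=
    Metric.dist_le_diam_of_mem hbd.closure (subset_closure hz) hcl
  rw [Metric.diam_closure] at h2
  have h3 : z - sInf A ≤ Metric.diam A := le_trans (le_abs_self _) h2
  exact ⟨h1, by linarith⟩

lemma exists_cover (s : ℝ) (Δ : Set ℝ) (h0 : μH[s] Δ = 0) (r ε : ℝ≥0∞)
    (hr : 0 < r) (hε : 0 < ε) :
    ∃ t : ℕ → Set ℝ, (Δ ⊆ ⋃ n, t n) ∧ (∀ n, EMetric.diam (t n) ≤ r) ∧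
      ∑' n, ⨆ _ : (t n).Nonempty, EMetric.diam (t n) ^ s < ε := by
  rw [Measure.hausdorffMeasure_apply] at h0
  have h1 : (⨅ (t : ℕ → Set ℝ) (_ : Δ ⊆ ⋃ n, t n) (_ : ∀ n, EMetric.diam (t n) ≤ r),
      ∑' n, ⨆ _ : (t n).Nonempty, EMetric.diam (t n) ^ s) = 0 := by
    refine le_antisymm ?_ zero_le
    rw [← h0]
    exact le_iSup₂ (f := fun (r' : ℝ≥0∞) (_ : 0 < r') =>
      ⨅ (t : ℕ → Set ℝ) (_ : Δ ⊆ ⋃ n, t n) (_ : ∀ n, EMetric.diam (t n) ≤ r'),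
        ∑' n, ⨆ _ : (t n).Nonempty, EMetric.diam (t n) ^ s) r hr
  have h2 : (⨅ (t : ℕ → Set ℝ) (_ : Δ ⊆ ⋃ n, t n) (_ : ∀ n, EMetric.diam (t n) ≤ r),
      ∑' n, ⨆ _ : (t n).Nonempty, EMetric.diam (t n) ^ s) < ε := h1 ▸ hε
  simp only [iInf_lt_iff] at h2
  obtain ⟨t, hcov, hdiam, hsum⟩ := h2
  exact ⟨t, hcov, hdiam, hsum⟩

set_option maxHeartbeats 4000000 in
/-- **Liu, Lemma 3.1 (criterion for dimension of pinned distance sets).**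
Let `E ⊆ ℝ^d` be compact, `x ∈ ℝ^d`, and `μ` a Borel probability measure with `μ E = 1`.
Suppose there are `τ ∈ (0,1]`, `K ∈ ℕ`, `β > 0` such that for every integer `k > K`,
every integer `M ≤ 2^(kτ)` and every family of `M` intervals `I₁, …, I_M` of lengths in
`[2^(-k-1), 2^(-k))`, one has `μ {y : |y - x| ∈ ⋃ⱼ Iⱼ} < 2^(-kβ)`.
Then `dimH (Δ_x(E)) ≥ τ`. -/
theorem dimH_pinned_distance_of_small_measure
    (d : ℕ) (E : Set (EuclideanSpace ℝ (Fin d))) (hE : IsCompact E)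
    (x : EuclideanSpace ℝ (Fin d))
    (μ : Measure (EuclideanSpace ℝ (Fin d))) [IsProbabilityMeasure μ] (hμE : μ E = 1)
    (τ β : ℝ) (hτ0 : 0 < τ) (hτ1 : τ ≤ 1) (K : ℕ) (hβ : 0 < β)
    (H : ∀ k : ℕ, K < k → ∀ M : ℕ, (M : ℝ) ≤ 2 ^ ((k : ℝ) * τ) →
      ∀ (I : Fin M → Set ℝ) (a b : Fin M → ℝ),
        (∀ j, Set.Ioo (a j) (b j) ⊆ I j) →
        (∀ j, I j ⊆ Set.Icc (a j) (b j)) →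
        (∀ j, 2 ^ (-(k : ℝ) - 1) ≤ b j - a j) →
        (∀ j, b j - a j < 2 ^ (-(k : ℝ))) →
        μ {y | dist x y ∈ ⋃ j, I j} < ENNReal.ofReal (2 ^ (-(k : ℝ) * β))) :
    ENNReal.ofReal τ ≤ dimH ((fun y => dist x y) '' E) := by
  by_contra hcon
  push_neg at hcon
  set Δ : Set ℝ := (fun y => dist x y) '' E with hΔ
  -- choose exponent s < τ above dimH
  obtain ⟨s', hs'1, hs'2⟩ := ENNReal.lt_iff_exists_nnreal_btwn.mp hcon
  set s : ℝ := (s' : ℝ) with hs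
  have hs0 : 0 < s := by
    have : (0 : ℝ≥0∞) < (s' : ℝ≥0∞) := lt_of_le_of_lt zero_le hs'1
    exact_mod_cast this
  have hsτ : s < τ := by
    have h2 : (s' : ℝ≥0∞) < ENNReal.ofReal τ := hs'2
    rw [ENNReal.ofReal, ENNReal.coe_lt_coe] at h2
    have := (Real.coe_toNNReal τ (le_of_lt hτ0))
    calc s < (τ.toNNReal : ℝ) := by exact_mod_cast h2
      _ = τ := this
  have hH0 : μH[s] Δ = 0 := hausdorffMeasure_of_dimH_lt hs'1
  -- choose parameters
  obtain ⟨K', hKK', hKβ⟩ := choose_Kp β hβ K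
  set ε' : ℝ := 2 ^ (((K':ℝ)+1)*(τ - s) - s) / 4 with hε'def
  have hε'pos : 0 < ε' :=
    div_pos (Real.rpow_pos_of_pos (by norm_num : (0:ℝ) < 2) _) (by norm_num)
  have hhalf0 : (0:ℝ) < (1/2:ℝ) ^ s := Real.rpow_pos_of_pos (by norm_num) _
  have hhalf1 : (1/2:ℝ) ^ s < 1 := Real.rpow_lt_one (by norm_num) (by norm_num) hs0
  set δ : ℝ := min ((2:ℝ) ^ (-((K':ℝ)+2))) ((ε' * (1 - (1/2:ℝ) ^ s)) ^ (s⁻¹)) with hδdef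
  have hδ0 : 0 < δ := by
    apply lt_min (Real.rpow_pos_of_pos (by norm_num) _)
    apply Real.rpow_pos_of_pos
    have : (0:ℝ) < 1 - (1/2:ℝ) ^ s := by linarith
    positivity
  have hδs : δ ^ s ≤ ε' * (1 - (1/2:ℝ) ^ s) := by
    have hx : (0:ℝ) ≤ ε' * (1 - (1/2:ℝ) ^ s) := by nlinarith
    have h1 : δ ≤ (ε' * (1 - (1/2:ℝ) ^ s)) ^ (s⁻¹) := min_le_right _ _
    have h2 : δ ^ s ≤ ((ε' * (1 - (1/2:ℝ) ^ s)) ^ (s⁻¹)) ^ s :=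
      Real.rpow_le_rpow (le_of_lt hδ0) h1 (le_of_lt hs0)
    exact h2.trans_eq (Real.rpow_inv_rpow hx (ne_of_gt hs0))
  -- extract cover
  obtain ⟨t, hcov, hdiam, hsum⟩ := exists_cover s Δ hH0
    (ENNReal.ofReal ((2:ℝ) ^ (-((K':ℝ)+2)))) (ENNReal.ofReal ε')
    (ENNReal.ofReal_pos.mpr (Real.rpow_pos_of_pos two_pos _)) (ENNReal.ofReal_pos.mpr hε'pos)
  -- the enlarged lengths
  set c : ℕ → ℝ := fun n => max (Metric.diam (t n)) (δ * (1/2:ℝ)^n) with hcdef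
  have hc0 : ∀ n, 0 < c n := fun n =>
    lt_max_of_lt_right (mul_pos hδ0 (pow_pos (by norm_num) n))
  have hcd : ∀ n, Metric.diam (t n) ≤ c n := fun n => le_max_left _ _
  have hdiamne : ∀ n, EMetric.diam (t n) ≠ ⊤ := fun n =>
    ne_top_of_le_ne_top ENNReal.ofReal_ne_top (hdiam n)
  have hdiamR : ∀ n, Metric.diam (t n) ≤ (2:ℝ) ^ (-((K':ℝ)+2)) := by
    intro n
    exact ENNReal.toReal_le_of_le_ofReal (Real.rpow_pos_of_pos two_pos _).le (hdiam n)
  have hclt : ∀ n, c n < 2 ^ (-((K':ℝ) + 1)) := by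
    intro n
    have hlt : (2:ℝ) ^ (-((K':ℝ)+2)) < 2 ^ (-((K':ℝ) + 1)) := by
      apply Real.rpow_lt_rpow_left_iff (one_lt_two) |>.mpr
      linarith
    apply max_lt (lt_of_le_of_lt (hdiamR n) hlt)
    have h1 : δ * (1/2:ℝ)^n ≤ δ := by
      nlinarith [pow_le_one₀ (by norm_num : (0:ℝ) ≤ 1/2) (by norm_num : (1/2:ℝ) ≤ 1) (n := n),
        pow_nonneg (by norm_num : (0:ℝ) ≤ 1/2) n]
    exact lt_of_le_of_lt h1 (lt_of_le_of_lt (min_le_left _ _) hlt)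
  have hdyad : ∀ n, ∃ k : ℕ, K' < k ∧ 2 ^ (-(k : ℝ) - 1) ≤ c n ∧ c n < 2 ^ (-(k : ℝ)) := by
    intro n
    exact dyadic_scale K' (c n) (hc0 n) (hclt n)
  choose k hk1 hk2 hk3 using hdyad
  set u : ℕ → ℝ := fun n => sInf (t n) with hudef
  have hsub : ∀ n, (t n).Nonempty → t n ⊆ Set.Icc (u n) (u n + c n) := by
    intro n hne
    exact subset_Icc_of_diam (t n) hne (hdiamne n) (c n) (hcd n)
  set S : ℕ → Set ℕ := fun m => {n | k n = m ∧ (t n).Nonempty} with hSdef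
  -- total sum bound
  have hTsum : ∀ (F : Finset ℕ), (∀ n ∈ F, (t n).Nonempty) →
      ∑ n ∈ F, ENNReal.ofReal (c n ^ s) ≤ ENNReal.ofReal ε' + ENNReal.ofReal ε' := by
    intro F hF
    have hterm : ∀ n ∈ F, ENNReal.ofReal (c n ^ s) ≤
        (⨆ _ : (t n).Nonempty, EMetric.diam (t n) ^ s) + ENNReal.ofReal ((δ * (1/2:ℝ)^n) ^ s) := by
      intro n hn
      rcases max_cases (Metric.diam (t n)) (δ * (1/2:ℝ)^n) with ⟨hmax, hge⟩ | ⟨hmax, hge⟩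
      · have hdpos : 0 < Metric.diam (t n) := lt_of_lt_of_le (mul_pos hδ0 (pow_pos (by norm_num) n)) hge
        have : ENNReal.ofReal (c n ^ s) = EMetric.diam (t n) ^ s := by
          rw [show c n = Metric.diam (t n) from hmax,
            ← ENNReal.ofReal_rpow_of_pos hdpos, Metric.diam,
            ENNReal.ofReal_toReal (a := Metric.ediam (t n)) (hdiamne n), EMetric.diam]
        rw [this]
        exact le_add_right (le_of_eq (by rw [iSup_pos (hF n hn)]))
      · rw [show c n = δ * (1/2:ℝ)^n from hmax]
        exact le_add_left (le_refl _)
    calc ∑ n ∈ F, ENNReal.ofReal (c n ^ s)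
        ≤ ∑ n ∈ F, ((⨆ _ : (t n).Nonempty, EMetric.diam (t n) ^ s)
            + ENNReal.ofReal ((δ * (1/2:ℝ)^n) ^ s)) := Finset.sum_le_sum hterm
      _ ≤ ∑' n : ℕ, ((⨆ _ : (t n).Nonempty, EMetric.diam (t n) ^ s)
            + ENNReal.ofReal ((δ * (1/2:ℝ)^n) ^ s)) := ENNReal.sum_le_tsum F
      _ = (∑' n : ℕ, ⨆ _ : (t n).Nonempty, EMetric.diam (t n) ^ s)
            + ∑' n : ℕ, ENNReal.ofReal ((δ * (1/2:ℝ)^n) ^ s) := ENNReal.tsum_add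
      _ ≤ ENNReal.ofReal ε' + ENNReal.ofReal ε' :=
          add_le_add (le_of_lt hsum) (delta_sum s ε' δ hs0 hδ0 hε'pos hδs)
  -- cardinality bound
  have hScard : ∀ m : ℕ, K' < m → ∀ (F : Finset ℕ), (↑F : Set ℕ) ⊆ S m →
      (F.card : ℝ) ≤ 2 ^ ((m:ℝ) * τ) := by
    intro m hm F hFS
    set p : ℝ := (2:ℝ) ^ ((-(m:ℝ) - 1) * s) with hpdef
    have hppos : 0 < p := Real.rpow_pos_of_pos (by norm_num) _
    have hlow : ∀ n ∈ F, ENNReal.ofReal p ≤ ENNReal.ofReal (c n ^ s) := by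
      intro n hn
      apply ENNReal.ofReal_le_ofReal
      have h1 : (2:ℝ) ^ (-(k n : ℝ) - 1) ≤ c n := hk2 n
      have h2 : k n = m := (hFS hn).1
      rw [hpdef, Real.rpow_mul (by norm_num : (0:ℝ) ≤ 2)]
      apply Real.rpow_le_rpow (Real.rpow_pos_of_pos two_pos _).le _ (le_of_lt hs0)
      rw [← h2]; exact h1
    have hcount : (F.card : ℝ≥0∞) * ENNReal.ofReal p ≤ ENNReal.ofReal ε' + ENNReal.ofReal ε' := by
      calc (F.card : ℝ≥0∞) * ENNReal.ofReal p = ∑ _n ∈ F, ENNReal.ofReal p := by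
            rw [Finset.sum_const, nsmul_eq_mul]
        _ ≤ ∑ n ∈ F, ENNReal.ofReal (c n ^ s) := Finset.sum_le_sum hlow
        _ ≤ _ := hTsum F (fun n hn => (hFS hn).2)
    have hreal : (F.card : ℝ) * p ≤ ε' + ε' := by
      have hcount' : ENNReal.ofReal ((F.card : ℝ) * p) ≤ ENNReal.ofReal (ε' + ε') := by
        rw [ENNReal.ofReal_mul (Nat.cast_nonneg _), ENNReal.ofReal_natCast,
          ENNReal.ofReal_add (le_of_lt hε'pos) (le_of_lt hε'pos)]
        exact hcount
      exact (ENNReal.ofReal_le_ofReal_iff (by linarith)).mp hcount'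
    -- now compare with 2^(mτ)
    have hkey : ε' + ε' ≤ 2 ^ ((m:ℝ) * τ) * p := by
      have h1 : ε' + ε' = 2 ^ (((K':ℝ)+1)*(τ - s) - s) / 2 := by
        rw [hε'def]; ring
      have h2 : (2:ℝ) ^ ((m:ℝ) * τ) * p = 2 ^ ((m:ℝ)*(τ - s) - s) := by
        rw [hpdef, ← Real.rpow_add (by norm_num)]
        congr 1; ring
      rw [h1, h2]
      have h3 : (((K':ℝ)+1)*(τ - s) - s) ≤ ((m:ℝ)*(τ - s) - s) := by
        have hm' : ((K':ℝ)+1) ≤ (m:ℝ) := by exact_mod_cast hm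
        nlinarith
      have h4 : (2:ℝ) ^ (((K':ℝ)+1)*(τ - s) - s) ≤ 2 ^ ((m:ℝ)*(τ - s) - s) :=
        Real.rpow_le_rpow_left_iff (one_lt_two) |>.mpr h3
      linarith [Real.rpow_pos_of_pos (by norm_num : (0:ℝ) < 2) (((K':ℝ)+1)*(τ - s) - s)]
    have := le_trans hreal hkey
    exact le_of_mul_le_mul_right (by linarith) hppos
  -- finiteness of scale classes
  have hSfin : ∀ m : ℕ, K' < m → (S m).Finite := by
    intro m hm
    by_contra hinf
    replace hinf : (S m).Infinite := hinf
    obtain ⟨F, hFsub, hFcard⟩ := hinf.exists_subset_card_eq (⌈(2:ℝ) ^ ((m:ℝ) * τ)⌉₊ + 1)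
    have h1 := hScard m hm F hFsub
    rw [hFcard] at h1
    have h2 : (2:ℝ) ^ ((m:ℝ) * τ) ≤ (⌈(2:ℝ) ^ ((m:ℝ) * τ)⌉₊ : ℝ) := Nat.le_ceil _
    push_cast at h1
    linarith
  -- measure bound per scale
  have hmeas : ∀ m : ℕ, K' < m →
      μ {y | dist x y ∈ ⋃ n ∈ S m, Set.Icc (u n) (u n + c n)} <
        ENNReal.ofReal ((2:ℝ) ^ (-(m:ℝ) * β)) := by
    intro m hm
    set F : Finset ℕ := (hSfin m hm).toFinset with hFdef
    have hFS : (↑F : Set ℕ) ⊆ S m := by rw [hFdef]; simp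
    set e : Fin F.card ≃ {n // n ∈ F} := F.equivFin.symm with hedef
    set a : Fin F.card → ℝ := fun j => u (e j) with hadef
    set b : Fin F.card → ℝ := fun j => u (e j) + c (e j) with hbdef
    have hUeq : (⋃ j, Set.Icc (a j) (b j)) = ⋃ n ∈ S m, Set.Icc (u n) (u n + c n) := by
      have h1 : (⋃ j, Set.Icc (a j) (b j)) =
          ⋃ n : {n // n ∈ F}, Set.Icc (u n) (u n + c n) :=
        e.surjective.iUnion_comp (fun n => Set.Icc (u n) (u n + c n))
      rw [h1]
      ext z
      simp only [Set.mem_iUnion, Subtype.exists]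
      constructor
      · rintro ⟨n, hn, hz⟩
        exact ⟨n, hFS hn, hz⟩
      · rintro ⟨n, hn, hz⟩
        refine ⟨n, ?_, hz⟩
        rw [hFdef]; simpa using hn
    have hkm : ∀ j : Fin F.card, k ((e j : ℕ)) = m := fun j => (hFS (e j).2).1
    have hcard : (F.card : ℝ) ≤ 2 ^ ((m:ℝ) * τ) := hScard m hm F hFS
    have := H m (lt_of_le_of_lt hKK' hm) F.card hcard
      (fun j => Set.Icc (a j) (b j)) a b
      (fun j => Set.Ioo_subset_Icc_self) (fun j => subset_rfl)
      (fun j => by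
        have := hk2 (e j : ℕ)
        rw [hkm j] at this
        simpa [hadef, hbdef] using this)
      (fun j => by
        have := hk3 (e j : ℕ)
        rw [hkm j] at this
        simpa [hadef, hbdef] using this)
    rwa [hUeq] at this
  -- covering of E
  have hEcov : E ⊆ ⋃ m : ℕ, {y | dist x y ∈ ⋃ n ∈ S (K'+1+m), Set.Icc (u n) (u n + c n)} := by
    intro y hy
    have hdy : dist x y ∈ Δ := ⟨y, hy, rfl⟩
    obtain ⟨_, ⟨n, rfl⟩, hn⟩ := hcov hdy
    have hne : (t n).Nonempty := ⟨_, hn⟩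
    have hmem : dist x y ∈ Set.Icc (u n) (u n + c n) := hsub n hne hn
    have hkn : K' < k n := hk1 n
    refine Set.mem_iUnion.mpr ⟨k n - (K'+1), ?_⟩
    have harith : K' + 1 + (k n - (K'+1)) = k n := by omega
    rw [harith]
    exact Set.mem_setOf_eq ▸ Set.mem_biUnion ⟨rfl, hne⟩ hmem
  -- final contradiction
  have hfinal : (1 : ℝ≥0∞) < 1 := by
    calc (1 : ℝ≥0∞) = μ E := hμE.symm
      _ ≤ μ (⋃ m : ℕ, {y | dist x y ∈ ⋃ n ∈ S (K'+1+m), Set.Icc (u n) (u n + c n)}) :=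
          measure_mono hEcov
      _ ≤ ∑' m : ℕ, μ {y | dist x y ∈ ⋃ n ∈ S (K'+1+m), Set.Icc (u n) (u n + c n)} :=
          measure_iUnion_le _
      _ ≤ ∑' m : ℕ, ENNReal.ofReal ((2:ℝ) ^ (-(((K'+1+m : ℕ)):ℝ) * β)) := by
          apply ENNReal.tsum_le_tsum
          intro m
          exact le_of_lt (hmeas (K'+1+m) (by omega))
      _ < 1 := tail_sum_lt_one β hβ K' hKβ
  exact absurd hfinal (lt_irrefl 1)
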